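/- The sequence of mean iterated distances is nonincreasing: if ρ_{n} is obtained from ρ_{n-1} by the Kantorovich iteration along a measurable partition ξ_n of the probability space (X, μ), then ∫_{X×X} ρ_n(x,y) dμ(x)dμ(y) ≤ ∫_{X×X} ρ_{n-1}(x,y) dμ(x)dμ(y). -/

import Mathlib

/-!
Couple `m x` and `m y` independently: then `ρnext x y ≤ ∫∫ ρprev a b d(m x)(a) d(m y)(b)`.
Averaging over `x` and `y` and using twice that the conditional measures `m` disintegrate `μ`
turns the right-hand side back into `∫∫ ρprev dμ dμ`.
-/

open MeasureTheory

/-- A coupling of `μ₁` and `μ₂`: a probability measure on `A × A` with the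
prescribed marginals. -/
def IsCoupling {A : Type*} [MeasurableSpace A]
    (Q : Measure (A × A)) (μ₁ μ₂ : Measure A) : Prop :=
  IsProbabilityMeasure Q ∧ Q.map Prod.fst = μ₁ ∧ Q.map Prod.snd = μ₂

/-- The Kantorovich transport distance associated with a cost function `c`. -/
noncomputable def kantCost {A : Type*} [MeasurableSpace A] (c : A → A → ℝ)
    (μ₁ μ₂ : Measure A) : ℝ :=
  sInf {t | ∃ Q : Measure (A × A), IsCoupling Q μ₁ μ₂ ∧ t = ∫ p, c p.1 p.2 ∂Q}

open ProbabilityTheory Function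

section Kantorovich

variable {A : Type*} [MeasurableSpace A] {c : A → A → ℝ}

lemma isCoupling_prod (μ₁ μ₂ : Measure A) [IsProbabilityMeasure μ₁] [IsProbabilityMeasure μ₂] :
    IsCoupling (μ₁.prod μ₂) μ₁ μ₂ :=
  ⟨inferInstance, by simp [Measure.map_fst_prod], by simp [Measure.map_snd_prod]⟩

lemma zero_mem_lowerBounds_couplingCosts (hc : ∀ a b, 0 ≤ c a b) (μ₁ μ₂ : Measure A) :
    0 ∈ lowerBounds {t | ∃ Q : Measure (A × A), IsCoupling Q μ₁ μ₂ ∧ t = ∫ p, c p.1 p.2 ∂Q} := by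
  rintro t ⟨Q, -, rfl⟩
  exact integral_nonneg fun p => hc p.1 p.2

lemma kantCost_nonneg (hc : ∀ a b, 0 ≤ c a b) (μ₁ μ₂ : Measure A) : 0 ≤ kantCost c μ₁ μ₂ :=
  Real.sInf_nonneg (zero_mem_lowerBounds_couplingCosts hc μ₁ μ₂)

lemma kantCost_le_integral_integral {C : ℝ} (hc : ∀ a b, 0 ≤ c a b)
    (hc_meas : Measurable (uncurry c)) (hC : ∀ a b, |c a b| ≤ C)
    (μ₁ μ₂ : Measure A) [IsProbabilityMeasure μ₁] [IsProbabilityMeasure μ₂] :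
    kantCost c μ₁ μ₂ ≤ ∫ a, ∫ b, c a b ∂μ₂ ∂μ₁ := by
  have hint : Integrable (uncurry c) (μ₁.prod μ₂) :=
    .of_bound hc_meas.aestronglyMeasurable C (ae_of_all _ fun p => hC p.1 p.2)
  exact (csInf_le ⟨0, zero_mem_lowerBounds_couplingCosts hc μ₁ μ₂⟩
    ⟨_, isCoupling_prod μ₁ μ₂, rfl⟩).trans_eq (integral_prod _ hint)

end Kantorovich

section Integrals

variable {X Y : Type*} [MeasurableSpace X] [MeasurableSpace Y]

lemma abs_integral_le_of_forall_abs_le {ν : Measure X} [IsProbabilityMeasure ν] {f : X → ℝ}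
    {C : ℝ} (h : ∀ x, |f x| ≤ C) : |∫ x, f x ∂ν| ≤ C := by
  simpa using norm_integral_le_of_norm_le_const (μ := ν)
    (ae_of_all _ fun x => (Real.norm_eq_abs (f x)).trans_le (h x))

lemma integral_integral_le_of_le {μ : Measure X} {ν : Measure Y} [IsFiniteMeasure μ]
    [IsFiniteMeasure ν] {f g : X → Y → ℝ} {C : ℝ} (hf : ∀ x y, 0 ≤ f x y)
    (hfg : ∀ x y, f x y ≤ g x y) (hg : Measurable (uncurry g)) (hC : ∀ x y, |g x y| ≤ C) :
    ∫ x, ∫ y, f x y ∂ν ∂μ ≤ ∫ x, ∫ y, g x y ∂ν ∂μ := by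
  have hg_int : ∀ x, Integrable (g x) ν := fun x =>
    .of_bound (hg.comp measurable_prodMk_left).aestronglyMeasurable C (ae_of_all _ (hC x))
  have hGint : Integrable (fun x => ∫ y, g x y ∂ν) μ := by
    refine .of_bound hg.stronglyMeasurable.integral_prod_right.aestronglyMeasurable
      (C * ν.real Set.univ) (ae_of_all _ fun x => ?_)
    exact norm_integral_le_of_norm_le_const (ae_of_all _ (hC x))
  refine integral_mono_of_nonneg (ae_of_all _ fun x => integral_nonneg (hf x)) hGint
    (ae_of_all _ fun x => ?_)
  exact integral_mono_of_nonneg (ae_of_all _ (hf x)) (hg_int x) (ae_of_all _ (hfg x))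

end Integrals

section Kernel

variable {X Y Z : Type*} [MeasurableSpace X] [MeasurableSpace Y] [MeasurableSpace Z]

lemma Measurable.integral_kernel_parametric {κ : Kernel X Z} [IsSFiniteKernel κ]
    {f : Y → Z → ℝ} (hf : Measurable (uncurry f)) :
    Measurable fun p : X × Y => ∫ z, f p.2 z ∂κ p.1 := by
  have : Measurable fun q : (X × Y) × Z => f q.1.2 q.2 :=
    hf.comp (measurable_fst.snd.prodMk measurable_snd)
  exact (this.stronglyMeasurable.integral_kernel_prod_right'
    (κ := κ.comap Prod.fst measurable_fst)).measurable

lemma measurable_integral_integral_kernel {κ : Kernel X Y} [IsSFiniteKernel κ]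
    {c : Y → Y → ℝ} (hc : Measurable (uncurry c)) :
    Measurable fun p : X × X => ∫ a, ∫ b, c a b ∂κ p.2 ∂κ p.1 :=
  Measurable.integral_kernel_parametric (f := fun y a => ∫ b, c a b ∂κ y)
    hc.integral_kernel_parametric

variable {μ : Measure X} [IsProbabilityMeasure μ] {κ : Kernel X X} [IsMarkovKernel κ]
  {c : X → X → ℝ} {C : ℝ}

lemma integral_integral_kernel_kernel_eq
    (hμκ : ∀ f : X → ℝ, Measurable f → (∃ C, ∀ x, |f x| ≤ C) →
      ∫ x, ∫ y, f y ∂κ x ∂μ = ∫ x, f x ∂μ)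
    (hc : Measurable (uncurry c)) (hC : ∀ a b, |c a b| ≤ C) :
    ∫ x, ∫ y, ∫ a, ∫ b, c a b ∂κ y ∂κ x ∂μ ∂μ = ∫ a, ∫ b, c a b ∂μ ∂μ := by
  have hinner : Measurable fun p : X × X => ∫ b, c p.2 b ∂κ p.1 := hc.integral_kernel_parametric
  have hswap (x : X) : ∫ y, ∫ a, ∫ b, c a b ∂κ y ∂κ x ∂μ = ∫ a, ∫ y, ∫ b, c a b ∂κ y ∂μ ∂κ x :=
    integral_integral_swap <| .of_bound hinner.aestronglyMeasurable C
      (ae_of_all _ fun p => abs_integral_le_of_forall_abs_le (hC p.2))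
  have hF : Measurable fun a => ∫ b, c a b ∂μ :=
    hc.stronglyMeasurable.integral_prod_right.measurable
  calc ∫ x, ∫ y, ∫ a, ∫ b, c a b ∂κ y ∂κ x ∂μ ∂μ
      = ∫ x, ∫ a, ∫ b, c a b ∂μ ∂κ x ∂μ := by
        refine integral_congr_ae (ae_of_all _ fun x => (hswap x).trans ?_)
        exact integral_congr_ae (ae_of_all _ fun a =>
          hμκ (c a) (hc.comp measurable_prodMk_left) ⟨C, hC a⟩)
    _ = ∫ a, ∫ b, c a b ∂μ ∂μ :=
        hμκ _ hF ⟨C, fun a => abs_integral_le_of_forall_abs_le (hC a)⟩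

end Kernel

theorem mean_iterated_distance_nonincreasing_general
    {X : Type*} [MeasurableSpace X] (μ : Measure X) [IsProbabilityMeasure μ]
    (m : X → Measure X) (hprob : ∀ x, IsProbabilityMeasure (m x))
    (hmeas_m : ∀ s : Set X, MeasurableSet s → Measurable fun x => m x s)
    (hdisint : ∀ f : X → ℝ, Measurable f → (∃ C, ∀ x, |f x| ≤ C) →
      (∫ x, (∫ y, f y ∂(m x)) ∂μ) = ∫ x, f x ∂μ)
    (ρprev : X → X → ℝ)
    (hmeas : Measurable fun p : X × X => ρprev p.1 p.2)
    (hbdd : ∃ C, ∀ x y, |ρprev x y| ≤ C)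
    (hnonneg : ∀ x y, 0 ≤ ρprev x y)
    (ρnext : X → X → ℝ)
    (hiter : ∀ x y, ρnext x y = kantCost ρprev (m x) (m y)) :
    (∫ x, ∫ y, ρnext x y ∂μ ∂μ) ≤ ∫ x, ∫ y, ρprev x y ∂μ ∂μ := by
  obtain ⟨C, hC⟩ := hbdd
  let κ : Kernel X X := ⟨m, Measure.measurable_of_measurable_coe m hmeas_m⟩
  have : IsMarkovKernel κ := ⟨hprob⟩
  calc ∫ x, ∫ y, ρnext x y ∂μ ∂μ ≤ ∫ x, ∫ y, ∫ a, ∫ b, ρprev a b ∂κ y ∂κ x ∂μ ∂μ := by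
        refine integral_integral_le_of_le (C := C) (fun x y => ?_) (fun x y => ?_)
          (measurable_integral_integral_kernel hmeas) (fun x y => ?_)
        · exact (hiter x y).symm ▸ kantCost_nonneg hnonneg _ _
        · exact (hiter x y).trans_le (kantCost_le_integral_integral hnonneg hmeas hC _ _)
        · exact abs_integral_le_of_forall_abs_le fun a => abs_integral_le_of_forall_abs_le (hC a)
    _ = ∫ x, ∫ y, ρprev x y ∂μ ∂μ := integral_integral_kernel_kernel_eq hdisint hmeas hC

/-- One step of the Kantorovich iteration along a measurable partition does not increase
the mean distance.  Here `m x` is the conditional measure of `μ` on the element of the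
partition containing `x` (so `m` is constant on partition elements and the conditional
measures disintegrate `μ`), `ρprev` is a bounded measurable semimetric, and
`ρnext x y = k_{ρprev}(m x, m y)` is the iterated semimetric.  Then
`∫∫ ρnext dμ dμ ≤ ∫∫ ρprev dμ dμ`. -/
theorem mean_iterated_distance_nonincreasing
    {X : Type*} [MeasurableSpace X] (μ : Measure X) [IsProbabilityMeasure μ]
    (m : X → Measure X) (hprob : ∀ x, IsProbabilityMeasure (m x))
    (hmeas_m : ∀ s : Set X, MeasurableSet s → Measurable fun x => m x s)
    (hconst : ∀ x : X, (m x) {z | m z = m x} = 1)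
    (hdisint : ∀ f : X → ℝ, Measurable f → (∃ C, ∀ x, |f x| ≤ C) →
      (∫ x, (∫ y, f y ∂(m x)) ∂μ) = ∫ x, f x ∂μ)
    (ρprev : X → X → ℝ)
    (hmeas : Measurable fun p : X × X => ρprev p.1 p.2)
    (hbdd : ∃ C, ∀ x y, |ρprev x y| ≤ C)
    (hnonneg : ∀ x y, 0 ≤ ρprev x y)
    (hsymm : ∀ x y, ρprev x y = ρprev y x)
    (htri : ∀ x y z, ρprev x z ≤ ρprev x y + ρprev y z)
    (hrefl : ∀ x, ρprev x x = 0)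
    (ρnext : X → X → ℝ)
    (hiter : ∀ x y, ρnext x y = kantCost ρprev (m x) (m y)) :
    (∫ x, ∫ y, ρnext x y ∂μ ∂μ) ≤ ∫ x, ∫ y, ρprev x y ∂μ ∂μ :=
  mean_iterated_distance_nonincreasing_general μ m hprob hmeas_m hdisint ρprev hmeas hbdd hnonneg
    ρnext hiter
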